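/- arXiv:2206.12345 — 5 statements merged into one kernel-verified Lean document; each statement's English description precedes it below -/
import Mathlib

section
/- For every P ∈ T_K there exists a point Q ∈ V_K representing an element of the closure of the φ-orbit of P such that N(Q) = M(Q) = M(P). -/
/-!
By the Barnes–Swinnerton-Dyer lemma, for every `t > M(P)` there are orbit representatives `Q`
with `N(Q) < t` inside one fixed compact box. The continuous `N` attains its minimum on the
closure of the orbit representatives in that box, and this minimum `N(Q)` is therefore at most
`M(P)`. Since `M` is `φ`-invariant it equals `M(P)` on the orbit, and upper semicontinuity gives
`M ≥ M(P)` on the orbit closure. Hence `M(P) ≤ M(Q) ≤ N(Q) ≤ M(P)`.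
-/

open NumberField IntermediateField

theorem Equiv.Perm.apply_zpow_of_invariant {α β : Type*} {σ : Equiv.Perm α} {f : α → β}
    (h : ∀ x, f (σ x) = f x) (k : ℤ) (x : α) : f ((σ ^ k) x) = f x := by
  induction k using Int.induction_on generalizing x with
  | zero => rfl
  | succ k ih => rw [zpow_add_one, Equiv.Perm.mul_apply, ih, h]
  | pred k ih =>
    rw [zpow_sub_one, Equiv.Perm.mul_apply, ih, ← h (σ⁻¹ x), Equiv.Perm.coe_inv,
      Equiv.apply_symm_apply]

theorem UpperSemicontinuous.le_of_mem_closure {X γ : Type*} [TopologicalSpace X] [LinearOrder γ]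
    {M : X → γ} (hM : UpperSemicontinuous M) {S : Set X} {m : γ} (h : ∀ x ∈ S, m ≤ M x)
    {x : X} (hx : x ∈ closure S) : m ≤ M x :=
  closure_minimal h (hM.isClosed_preimage m) hx

theorem IsCompact.exists_mem_closure_le_of_forall_exists_lt {E β : Type*} [TopologicalSpace E]
    [LinearOrder β] [NoMaxOrder β] {K A : Set E} (hK : IsCompact K) {N : E → β}
    (hN : LowerSemicontinuous N) {m : β} (h : ∀ t, m < t → ∃ Q ∈ K ∩ A, N Q < t) :
    ∃ Q ∈ K ∩ closure A, N Q ≤ m := by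
  have hC : IsCompact (K ∩ closure A) := hK.inter_right isClosed_closure
  have hsub : K ∩ A ⊆ K ∩ closure A := Set.inter_subset_inter_right K subset_closure
  obtain ⟨t, ht⟩ := exists_gt m
  obtain ⟨Q₀, hQ₀, -⟩ := h t ht
  obtain ⟨Q, hQ, hmin⟩ := (hN.lowerSemicontinuousOn _).exists_isMinOn ⟨Q₀, hsub hQ₀⟩ hC
  refine ⟨Q, hQ, le_of_forall_gt fun t ht => ?_⟩
  obtain ⟨Q', hQ', hlt⟩ := h t ht
  exact (hmin (hsub hQ')).trans_lt hlt

theorem exists_rep_in_orbit_closure_with_norm_eq_general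
    (L : AddSubgroup (ℝ × ℝ))
    (Nm : ℝ × ℝ → ℝ) (hNm : ∀ p, Nm p = |p.1 * p.2|)
    (Mbar : (ℝ × ℝ) ⧸ L → ℝ) (husc : UpperSemicontinuous Mbar)
    (φe : ((ℝ × ℝ) ⧸ L) ≃ ((ℝ × ℝ) ⧸ L))
    (hinv : ∀ x, Mbar (φe x) = Mbar x)
    (hMN : ∀ Q : ℝ × ℝ, Mbar (QuotientAddGroup.mk Q) ≤ Nm Q)
    (e : ℝ) (he : 1 < e)
    -- the Barnes–Swinnerton-Dyer lemma:
    (hbsd : ∀ (x : (ℝ × ℝ) ⧸ L) (t : ℝ), Mbar x < t →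
      ∃ Q : ℝ × ℝ, (∃ k : ℤ, QuotientAddGroup.mk Q = (φe ^ k) x) ∧
        |Q.1| < Real.sqrt (e * t) ∧ |Q.2| < Real.sqrt (e * t) ∧ Nm Q < t)
    (P : (ℝ × ℝ) ⧸ L) :
    ∃ Q : ℝ × ℝ,
      QuotientAddGroup.mk Q ∈ closure (Set.range fun k : ℤ => (φe ^ k) P) ∧
      Nm Q = Mbar P ∧ Mbar (QuotientAddGroup.mk Q) = Mbar P := by
  set orbit := Set.range fun k : ℤ => (φe ^ k) P
  set R := Real.sqrt (e * (Mbar P + 1))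
  have hNm_cont : Continuous Nm := by
    rw [funext hNm]
    fun_prop
  have happrox : ∀ t, Mbar P < t →
      ∃ Q ∈ Metric.closedBall 0 R ∩ QuotientAddGroup.mk ⁻¹' orbit, Nm Q < t := by
    intro t ht
    obtain ⟨Q, ⟨k, hk⟩, hQ₁, hQ₂, hQ⟩ := hbsd P (min t (Mbar P + 1)) (lt_min ht (lt_add_one _))
    have hR : Real.sqrt (e * min t (Mbar P + 1)) ≤ R :=
      Real.sqrt_le_sqrt (mul_le_mul_of_nonneg_left (min_le_right _ _) (by linarith))
    refine ⟨Q, ⟨mem_closedBall_zero_iff.2 (norm_prod_le_iff.2 ⟨?_, ?_⟩), k, hk.symm⟩,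
      hQ.trans_le (min_le_left _ _)⟩
    · exact hQ₁.le.trans hR
    · exact hQ₂.le.trans hR
  obtain ⟨Q, ⟨-, hQ_cl⟩, hQ_le⟩ :=
    (isCompact_closedBall 0 R).exists_mem_closure_le_of_forall_exists_lt
      hNm_cont.lowerSemicontinuous happrox
  have hQ_orbit : QuotientAddGroup.mk Q ∈ closure orbit :=
    continuous_quotient_mk'.closure_preimage_subset orbit hQ_cl
  have hM_ge : Mbar P ≤ Mbar (QuotientAddGroup.mk Q) := by
    refine husc.le_of_mem_closure ?_ hQ_orbit
    rintro _ ⟨k, rfl⟩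
    exact (Equiv.Perm.apply_zpow_of_invariant hinv k P).ge
  have hM_le := hMN Q
  exact ⟨Q, hQ_orbit, by linarith, by linarith⟩

/-- For every `P ∈ T_K` there exists a point `Q ∈ V_K` representing an element of the
closure of the `φ`-orbit of `P` such that `N(Q) = M(Q) = M(P)`. -/
theorem exists_rep_in_orbit_closure_with_norm_eq
    (D : ℕ) (hD : Squarefree D) (hD1 : 1 < D)
    (K : IntermediateField ℚ ℝ) (hK : K = ℚ⟮(Real.sqrt D : ℝ)⟯)
    (L : AddSubgroup (ℝ × ℝ))
    (Nm : ℝ × ℝ → ℝ) (hNm : ∀ p, Nm p = |p.1 * p.2|)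
    (Mbar : (ℝ × ℝ) ⧸ L → ℝ) (husc : UpperSemicontinuous Mbar)
    (φe : ((ℝ × ℝ) ⧸ L) ≃ ((ℝ × ℝ) ⧸ L))
    (hinv : ∀ x, Mbar (φe x) = Mbar x)
    (hMN : ∀ Q : ℝ × ℝ, Mbar (QuotientAddGroup.mk Q) ≤ Nm Q)
    (e : ℝ) (he : 1 < e)
    -- the Barnes–Swinnerton-Dyer lemma:
    (hbsd : ∀ (x : (ℝ × ℝ) ⧸ L) (t : ℝ), Mbar x < t →
      ∃ Q : ℝ × ℝ, (∃ k : ℤ, QuotientAddGroup.mk Q = (φe ^ k) x) ∧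
        |Q.1| < Real.sqrt (e * t) ∧ |Q.2| < Real.sqrt (e * t) ∧ Nm Q < t)
    (P : (ℝ × ℝ) ⧸ L) :
    ∃ Q : ℝ × ℝ,
      QuotientAddGroup.mk Q ∈ closure (Set.range fun k : ℤ => (φe ^ k) P) ∧
      Nm Q = Mbar P ∧ Mbar (QuotientAddGroup.mk Q) = Mbar P :=
  exists_rep_in_orbit_closure_with_norm_eq_general L Nm hNm Mbar husc φe hinv hMN e he hbsd P
end

section
/- If P ∈ T_K is a K-point (i.e., has coordinates in K), then there exists N ∈ ℕ such that φ^k(NP) → 0 as |k| → ∞. -/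
/-!
Clearing denominators, `N • P` lifts to `(c, d)` with `c, d ∈ 𝓞_K`. Every embedding of `ℚ(√D)`
into `ℝ` maps it onto itself, so `c = σ y` with `y ∈ 𝓞_K`. Subtracting the lattice points
`ι (ε ^ k * d)`, resp. `ι (ε ^ k * y)`, from `φ ^ k (c, d) = (σ ε ^ k * c, ε ^ k * d)` leaves
`(σ ε ^ k * (c - σ d), 0)`, resp. `(0, ε ^ k * (d - y))`, which tends to `0` as `k → +∞`,
resp. `k → -∞`.
-/

open IntermediateField Filter

namespace IntermediateField

variable {F E : Type*} [Field F] [Field E] [Algebra F E] {x : E} {r : F}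

theorem finiteDimensional_of_sq_eq_algebraMap (hx : x ^ 2 = algebraMap F E r) :
    FiniteDimensional F F⟮x⟯ :=
  adjoin.finiteDimensional (.of_pow two_pos (hx ▸ isIntegral_algebraMap))

theorem le_fieldRange_of_sq_eq_algebraMap (hx : x ^ 2 = algebraMap F E r)
    (f : F⟮x⟯ →ₐ[F] E) : F⟮x⟯ ≤ f.fieldRange := by
  have hgen : f (AdjoinSimple.gen F x) ^ 2 = x ^ 2 := by
    rw [← map_pow, hx, ← f.commutes r]
    congr 1
    exact Subtype.ext (by simpa using hx)
  rw [adjoin_simple_le_iff]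
  rcases sq_eq_sq_iff_eq_or_eq_neg.mp hgen with h | h
  · exact ⟨_, h⟩
  · exact ⟨-AdjoinSimple.gen F x, by simp [h]⟩

theorem exists_isIntegral_map_eq_of_sq_eq_algebraMap (hx : x ^ 2 = algebraMap F E r)
    (f : F⟮x⟯ →ₐ[F] E) {c : F⟮x⟯} (hc : IsIntegral ℤ c) :
    ∃ y : F⟮x⟯, IsIntegral ℤ y ∧ f y = c := by
  obtain ⟨y, hy⟩ := le_fieldRange_of_sq_eq_algebraMap hx f c.2
  refine ⟨y, ?_, hy⟩
  rw [← isIntegral_algHom_iff f.toRingHom.toIntAlgHom f.injective]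
  exact hy ▸ hc.map (F⟮x⟯).val.toRingHom.toIntAlgHom

end IntermediateField

theorem exists_pos_nat_smul_isIntegral {A : Type*} [CommRing A] [Algebra ℚ A]
    [Algebra.IsAlgebraic ℚ A] (s : Finset A) :
    ∃ N : ℕ, 0 < N ∧ ∀ z ∈ s, IsIntegral ℤ (N • z) := by
  have : Algebra.IsAlgebraic ℤ ℚ := IsLocalization.isAlgebraic ℚ (nonZeroDivisors ℤ)
  have : Algebra.IsAlgebraic ℤ A := Algebra.IsAlgebraic.trans ℤ ℚ A
  obtain ⟨y, hy, hint⟩ := Algebra.IsAlgebraic.exists_integral_multiples ℤ s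
  refine ⟨y.natAbs, Int.natAbs_pos.mpr hy, fun z hz => ?_⟩
  rw [← natCast_zsmul]
  rcases Int.natAbs_eq y with h | h
  · exact h ▸ hint z hz
  · rw [← neg_neg (y.natAbs : ℤ), ← h, neg_smul]
    exact (hint z hz).neg

theorem IsIntegral.zpow {R A : Type*} [CommRing R] [Field A] [Algebra R A] {x : A}
    (hx : IsIntegral R x) (hx' : IsIntegral R x⁻¹) : ∀ k : ℤ, IsIntegral R (x ^ k)
  | .ofNat n => by simpa using hx.pow n
  | .negSucc n => by simpa [zpow_negSucc, inv_pow] using hx'.pow (n + 1)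

theorem tendsto_zpow_atTop_nhds_zero_of_abs_lt_one {r : ℝ} (hr : |r| < 1) :
    Tendsto (fun k : ℤ => r ^ k) atTop (nhds 0) := by
  rw [← Nat.map_cast_int_atTop, tendsto_map'_iff]
  simpa [Function.comp_def] using tendsto_pow_atTop_nhds_zero_of_abs_lt_one hr

theorem tendsto_zpow_atBot_nhds_zero_of_one_lt_abs {r : ℝ} (hr : 1 < |r|) :
    Tendsto (fun k : ℤ => r ^ k) atBot (nhds 0) := by
  have hinv : |r⁻¹| < 1 := by
    rw [abs_inv]; exact inv_lt_one_of_one_lt₀ hr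
  simpa [Function.comp_def, inv_zpow'] using
    (tendsto_zpow_atTop_nhds_zero_of_abs_lt_one hinv).comp tendsto_neg_atBot_atTop

theorem QuotientAddGroup.tendsto_mk_nhds_zero_of_sub_mem {G α : Type*} [AddCommGroup G]
    [TopologicalSpace G] {L : AddSubgroup G} {l : Filter α} {f g : α → G}
    (hfg : ∀ i, f i - g i ∈ L) (hg : Tendsto g l (nhds 0)) :
    Tendsto (fun i => (f i : G ⧸ L)) l (nhds 0) := by
  have hmk := (continuous_mk (N := L)).tendsto 0
  rw [mk_zero] at hmk
  exact (hmk.comp hg).congr fun i => (eq_iff_sub_mem.mpr (hfg i)).symm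

theorem zpow_apply_mk_of_apply_mk {L : AddSubgroup (ℝ × ℝ)} {s e : ℝ} (hs : s ≠ 0) (he : e ≠ 0)
    {φ : Equiv.Perm ((ℝ × ℝ) ⧸ L)}
    (hφ : ∀ v : ℝ × ℝ, φ (QuotientAddGroup.mk v) = QuotientAddGroup.mk (s * v.1, e * v.2))
    (k : ℤ) (v : ℝ × ℝ) :
    (φ ^ k) (QuotientAddGroup.mk v) = QuotientAddGroup.mk (s ^ k * v.1, e ^ k * v.2) := by
  induction k using Int.induction_on generalizing v with
  | zero => simp
  | succ n ih =>
    rw [zpow_add_one, Equiv.Perm.mul_apply, hφ, ih, zpow_add_one₀ hs, zpow_add_one₀ he]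
    congr 2 <;> ring
  | pred n ih =>
    apply φ.injective
    rw [← Equiv.Perm.mul_apply, ← zpow_one_add, add_sub_cancel, ih, hφ]
    simp only [zpow_sub_one₀ hs, zpow_sub_one₀ he]
    congr 2 <;> field_simp

section Lattice

variable {K : IntermediateField ℚ ℝ} {σ : K →+* ℝ} {L : AddSubgroup (ℝ × ℝ)}

theorem tendsto_mk_zpow_atTop_of_isIntegral (hL : ∀ z : K, IsIntegral ℤ z → (σ z, (z : ℝ)) ∈ L)
    {ε d : K} (hε : IsIntegral ℤ ε) (hε' : IsIntegral ℤ ε⁻¹) (hσε : |σ ε| < 1)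
    (hd : IsIntegral ℤ d) (x : ℝ) :
    Tendsto (fun k : ℤ => (QuotientAddGroup.mk (σ ε ^ k * x, (ε : ℝ) ^ k * d) : (ℝ × ℝ) ⧸ L))
      atTop (nhds 0) := by
  refine QuotientAddGroup.tendsto_mk_nhds_zero_of_sub_mem
    (g := fun k => (σ ε ^ k * (x - σ d), 0)) (fun k => ?_) ?_
  · convert hL _ ((hε.zpow hε' k).mul hd) using 1
    simp only [Prod.mk_sub_mk, map_mul, map_zpow₀, IntermediateField.coe_mul,
      show ((ε ^ k : K) : ℝ) = (ε : ℝ) ^ k from map_zpow₀ K.val ε k]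
    congr 1 <;> ring
  · simpa only [zero_mul, Prod.mk_zero_zero] using
      ((tendsto_zpow_atTop_nhds_zero_of_abs_lt_one hσε).mul_const (x - σ d)).prodMk_nhds
        (tendsto_const_nhds (x := (0 : ℝ)))

theorem tendsto_mk_zpow_atBot_of_isIntegral (hL : ∀ z : K, IsIntegral ℤ z → (σ z, (z : ℝ)) ∈ L)
    {ε y : K} (hε : IsIntegral ℤ ε) (hε' : IsIntegral ℤ ε⁻¹) (hε1 : 1 < |(ε : ℝ)|)
    (hy : IsIntegral ℤ y) (x : ℝ) :
    Tendsto (fun k : ℤ => (QuotientAddGroup.mk (σ ε ^ k * σ y, (ε : ℝ) ^ k * x) : (ℝ × ℝ) ⧸ L))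
      atBot (nhds 0) := by
  refine QuotientAddGroup.tendsto_mk_nhds_zero_of_sub_mem
    (g := fun k => (0, (ε : ℝ) ^ k * (x - y))) (fun k => ?_) ?_
  · convert hL _ ((hε.zpow hε' k).mul hy) using 1
    simp only [Prod.mk_sub_mk, map_mul, map_zpow₀, IntermediateField.coe_mul,
      show ((ε ^ k : K) : ℝ) = (ε : ℝ) ^ k from map_zpow₀ K.val ε k]
    congr 1 <;> ring
  · simpa only [zero_mul, Prod.mk_zero_zero] using
      (tendsto_const_nhds (x := (0 : ℝ))).prodMk_nhds
        ((tendsto_zpow_atBot_nhds_zero_of_one_lt_abs hε1).mul_const (x - y))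

end Lattice

theorem Kpoint_multiple_tendsto_zero_general
    (D : ℕ)
    (K : IntermediateField ℚ ℝ) (hK : K = ℚ⟮(Real.sqrt D : ℝ)⟯)
    (σ : K →+* ℝ)
    (ι : K → ℝ × ℝ) (hι : ∀ a : K, ι a = (σ a, (a : ℝ)))
    (L : AddSubgroup (ℝ × ℝ)) (hL : (L : Set (ℝ × ℝ)) = ι '' {a : K | IsIntegral ℤ a})
    (ε : K)
    (hfund : IsIntegral ℤ ε ∧ IsIntegral ℤ ε⁻¹ ∧ 1 < (ε : ℝ) ∧
      ∀ u : K, IsIntegral ℤ u → IsIntegral ℤ u⁻¹ →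
        ∃ n : ℤ, u = ε ^ n ∨ u = -ε ^ n)
    (hσε : |σ ε| < 1)
    (φe : ((ℝ × ℝ) ⧸ L) ≃ ((ℝ × ℝ) ⧸ L))
    (hφ : ∀ v : ℝ × ℝ,
      φe (QuotientAddGroup.mk v) = QuotientAddGroup.mk (σ ε * v.1, (ε : ℝ) * v.2))
    (P : (ℝ × ℝ) ⧸ L)
    (hP : ∃ a b : K, P = QuotientAddGroup.mk (((a : ℝ), (b : ℝ)) : ℝ × ℝ)) :
    ∃ N : ℕ, 0 < N ∧
      Tendsto (fun k : ℤ => (φe ^ k) (N • P)) cofinite (nhds 0) := by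
  obtain ⟨hε, hε', hε1, -⟩ := hfund
  obtain ⟨a, b, rfl⟩ := hP
  subst hK
  have hsq : (Real.sqrt D) ^ 2 = algebraMap ℚ ℝ D := by simp
  have := finiteDimensional_of_sq_eq_algebraMap hsq
  have hmem : ∀ z, IsIntegral ℤ z → (σ z, (z : ℝ)) ∈ L := fun z hz => by
    rw [← SetLike.mem_coe, hL]
    exact ⟨z, hz, hι z⟩
  obtain ⟨N, hN, hint⟩ := exists_pos_nat_smul_isIntegral {a, b}
  obtain ⟨y, hy, hσy⟩ :=
    exists_isIntegral_map_eq_of_sq_eq_algebraMap hsq σ.toRatAlgHom (hint a (by simp))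
  change σ y = _ at hσy
  have hε0 : (ε : ℝ) ≠ 0 := (zero_lt_one.trans hε1).ne'
  have hσε0 : σ ε ≠ 0 := (map_ne_zero σ).mpr (by rintro rfl; exact hε0 rfl)
  have horbit (k : ℤ) : (φe ^ k) (N • QuotientAddGroup.mk ((a : ℝ), (b : ℝ))) =
      QuotientAddGroup.mk (σ ε ^ k * σ y, (ε : ℝ) ^ k * ↑(N • b)) := by
    rw [← QuotientAddGroup.mk_nsmul, zpow_apply_mk_of_apply_mk hσε0 hε0 hφ]
    simp [hσy]
  refine ⟨N, hN, ?_⟩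
  rw [Int.cofinite_eq, tendsto_sup, funext horbit]
  exact ⟨tendsto_mk_zpow_atBot_of_isIntegral hmem hε hε' (hε1.trans_le (le_abs_self _)) hy _,
    tendsto_mk_zpow_atTop_of_isIntegral hmem hε hε' hσε (hint b (by simp)) _⟩

/-- If `P ∈ T_K` is a `K`-point (i.e., has a lift with stable/unstable coordinates
in `K`), then there exists `N ∈ ℕ` such that `φ^k(N·P) → 0` as `|k| → ∞`. -/
theorem Kpoint_multiple_tendsto_zero
    (D : ℕ) (hD : Squarefree D) (hD1 : 1 < D)
    (K : IntermediateField ℚ ℝ) (hK : K = ℚ⟮(Real.sqrt D : ℝ)⟯)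
    (σ : K →+* ℝ) (hσ : ∃ x : K, σ x ≠ (x : ℝ))
    (ι : K → ℝ × ℝ) (hι : ∀ a : K, ι a = (σ a, (a : ℝ)))
    (L : AddSubgroup (ℝ × ℝ)) (hL : (L : Set (ℝ × ℝ)) = ι '' {a : K | IsIntegral ℤ a})
    (ε : K)
    (hfund : IsIntegral ℤ ε ∧ IsIntegral ℤ ε⁻¹ ∧ 1 < (ε : ℝ) ∧
      ∀ u : K, IsIntegral ℤ u → IsIntegral ℤ u⁻¹ →
        ∃ n : ℤ, u = ε ^ n ∨ u = -ε ^ n)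
    (hσε : |σ ε| < 1)
    (φe : ((ℝ × ℝ) ⧸ L) ≃ ((ℝ × ℝ) ⧸ L))
    (hφ : ∀ v : ℝ × ℝ,
      φe (QuotientAddGroup.mk v) = QuotientAddGroup.mk (σ ε * v.1, (ε : ℝ) * v.2))
    (P : (ℝ × ℝ) ⧸ L)
    (hP : ∃ a b : K, P = QuotientAddGroup.mk (((a : ℝ), (b : ℝ)) : ℝ × ℝ)) :
    ∃ N : ℕ, 0 < N ∧
      Tendsto (fun k : ℤ => (φe ^ k) (N • P)) cofinite (nhds 0) :=
  Kpoint_multiple_tendsto_zero_general D K hK σ ι hι L hL ε hfund hσε φe hφ P hP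
end

section
/- If P ∈ T_K is a K-point, then M(P) ∈ K. -/
/-!
Since `σ √D = ±√D`, the embedding `σ` maps `K = ℚ(√D)` into itself, so the lattice `L` lies in
`K × K`. Consequently a class in `(ℝ × ℝ) ⧸ L` has one representative in `K × K` iff all of them
are there, multiplication by `(σ ε, ε)` preserves such classes in both directions, and torsion
classes (rational multiples of lattice vectors) are among them. By (a), the point `Q` of (b) is
therefore a `K`-point with coordinates in `K`, and `M(P) = |Q₁ Q₂| ∈ K`.
-/

open NumberField IntermediateField

theorem IntermediateField.map_mem_adjoin_simple_of_sq_eq {E : Type*} [Field E] [CharZero E]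
    {α : E} {q : ℚ} (hα : α ^ 2 = q) (σ : ℚ⟮α⟯ →+* E) (x : ℚ⟮α⟯) : σ x ∈ ℚ⟮α⟯ := by
  set γ := AdjoinSimple.gen ℚ α
  have hγ : σ γ ∈ ℚ⟮α⟯ := by
    have hsq : σ γ ^ 2 = α ^ 2 := by
      have : γ ^ 2 = (q : ℚ⟮α⟯) := Subtype.ext (by simpa [γ] using hα)
      rw [← map_pow, this, map_ratCast, hα]
    rcases sq_eq_sq_iff_eq_or_eq_neg.mp hsq with h | h <;> rw [h]
    · exact mem_adjoin_simple_self ℚ α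
    · exact neg_mem (mem_adjoin_simple_self ℚ α)
  obtain ⟨y, hy⟩ := x
  induction hy using adjoin_induction with
  | mem y hy => obtain rfl := hy; exact hγ
  | algebraMap q =>
    change σ (q : ℚ⟮α⟯) ∈ ℚ⟮α⟯
    rw [map_ratCast]
    exact SubfieldClass.ratCast_mem _ q
  | add y z hy hz ihy ihz =>
    change σ (⟨y, hy⟩ + ⟨z, hz⟩) ∈ ℚ⟮α⟯
    exact (map_add σ _ _) ▸ add_mem ihy ihz
  | inv y hy ih =>
    change σ (⟨y, hy⟩⁻¹) ∈ ℚ⟮α⟯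
    exact (map_inv₀ σ _) ▸ inv_mem ih
  | mul y z hy hz ihy ihz =>
    change σ (⟨y, hy⟩ * ⟨z, hz⟩) ∈ ℚ⟮α⟯
    exact (map_mul σ _ _) ▸ mul_mem ihy ihz

theorem QuotientAddGroup.mk_mem_map_mk'_iff {V : Type*} [AddCommGroup V] {L W : AddSubgroup V}
    (hLW : L ≤ W) {v : V} : (v : V ⧸ L) ∈ W.map (mk' L) ↔ v ∈ W := by
  rw [← mk'_apply, ← AddSubgroup.mem_comap, AddSubgroup.comap_map_eq, ker_mk', sup_of_le_left hLW]

theorem QuotientAddGroup.mem_of_nsmul_mk_eq_zero {F V : Type*} [DivisionRing F] [CharZero F]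
    [AddCommGroup V] [Module F V] {L : AddSubgroup V} {W : Submodule F V}
    (hLW : L ≤ W.toAddSubgroup) {v : V} {n : ℕ} (hn : n ≠ 0) (h : n • (v : V ⧸ L) = 0) :
    v ∈ W := by
  have hnv : n • v ∈ W := hLW ((eq_zero_iff _).mp (by rwa [mk_nsmul]))
  rwa [← Nat.cast_smul_eq_nsmul F, Submodule.smul_mem_iff W (Nat.cast_ne_zero.mpr hn)] at hnv

theorem Equiv.Perm.zpow_apply_mem_iff {α : Type*} {f : Equiv.Perm α} {S : Set α}
    (hS : ∀ x, f x ∈ S ↔ x ∈ S) (k : ℤ) (x : α) : (f ^ k) x ∈ S ↔ x ∈ S := by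
  induction k using Int.induction_on generalizing x with
  | zero => rfl
  | succ n ih => rw [add_comm, zpow_add, zpow_one, Perm.mul_apply, hS, ih]
  | pred n ih =>
    rw [← hS, ← Perm.mul_apply, ← zpow_one_add, add_sub_cancel, ih]

theorem mul_mem_cancel_left₀ {E S : Type*} [Field E] [SetLike S E] [SubfieldClass S E] {K : S}
    {a x : E} (ha : a ∈ K) (ha0 : a ≠ 0) : a * x ∈ K ↔ x ∈ K :=
  ⟨fun h => inv_mul_cancel_left₀ ha0 x ▸ mul_mem (inv_mem ha) h, mul_mem ha⟩

def IntermediateField.kPoints {F E : Type*} [Field F] [Field E] [Algebra F E]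
    (K : IntermediateField F E) : Submodule F (E × E) :=
  K.toSubalgebra.toSubmodule.prod K.toSubalgebra.toSubmodule

namespace IntermediateField

variable {F E : Type*} [Field F] [Field E] [Algebra F E] {K : IntermediateField F E}

@[simp]
theorem mem_kPoints {v : E × E} : v ∈ K.kPoints ↔ v.1 ∈ K ∧ v.2 ∈ K := Iff.rfl

theorem le_kPoints_of_subset_range {σ : K →+* E} (hσK : ∀ x, σ x ∈ K) {L : AddSubgroup (E × E)}
    (hL : (L : Set (E × E)) ⊆ Set.range fun a : K => (σ a, (a : E))) :
    L ≤ K.kPoints.toAddSubgroup := by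
  intro v hv
  obtain ⟨a, rfl⟩ := hL hv
  exact ⟨hσK a, a.2⟩

open QuotientAddGroup in
theorem perm_apply_mem_map_kPoints_iff {σ : K →+* E} (hσK : ∀ x, σ x ∈ K)
    {L : AddSubgroup (E × E)} (hLW : L ≤ K.kPoints.toAddSubgroup) {ε : K}
    {φ : Equiv.Perm ((E × E) ⧸ L)}
    (hφ : ∀ v : E × E, φ v = ((σ ε * v.1, (ε : E) * v.2) : E × E)) (x : (E × E) ⧸ L) :
    φ x ∈ K.kPoints.toAddSubgroup.map (mk' L) ↔ x ∈ K.kPoints.toAddSubgroup.map (mk' L) := by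
  obtain ⟨v, rfl⟩ := mk_surjective x
  by_cases hε : ε = 0
  · -- `φ` is then constant, so the quotient is a single point
    have hall : ∀ w : E × E, (w : (E × E) ⧸ L) = ((0 : E × E) : (E × E) ⧸ L) := fun w =>
      φ.injective (by rw [hφ, hφ]; simp [hε])
    obtain ⟨w, hw⟩ := mk_surjective (φ v)
    rw [← hw, hall w, hall v]
  · have hσε : σ ε ≠ 0 := (map_ne_zero σ).mpr hε
    rw [hφ, mk_mem_map_mk'_iff hLW, mk_mem_map_mk'_iff hLW]
    simp only [Submodule.mem_toAddSubgroup, mem_kPoints]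
    exact and_congr (mul_mem_cancel_left₀ (hσK ε) hσε)
      (mul_mem_cancel_left₀ ε.2 (by exact_mod_cast hε))

end IntermediateField

open QuotientAddGroup in
theorem Kpoint_M_mem_K_general
    (D : ℕ)
    (K : IntermediateField ℚ ℝ) (hK : K = ℚ⟮(Real.sqrt D : ℝ)⟯)
    (σ : K →+* ℝ)
    (ι : K → ℝ × ℝ) (hι : ∀ a : K, ι a = (σ a, (a : ℝ)))
    (L : AddSubgroup (ℝ × ℝ)) (hL : (L : Set (ℝ × ℝ)) = ι '' {a : K | IsIntegral ℤ a})
    (Nm : ℝ × ℝ → ℝ) (hNm : ∀ p, Nm p = |p.1 * p.2|)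
    (Mbar : (ℝ × ℝ) ⧸ L → ℝ)
    (ε : K)
    (φe : ((ℝ × ℝ) ⧸ L) ≃ ((ℝ × ℝ) ⧸ L))
    (hφ : ∀ v : ℝ × ℝ,
      φe (QuotientAddGroup.mk v) = QuotientAddGroup.mk (σ ε * v.1, (ε : ℝ) * v.2))
    (P : (ℝ × ℝ) ⧸ L)
    -- `P` is a `K`-point:
    (hP : ∃ a b : K, P = QuotientAddGroup.mk (((a : ℝ), (b : ℝ)) : ℝ × ℝ))
    -- (a) the orbit closure of the `K`-point `P` consists of the orbit of `P`
    -- together with finitely many torsion points: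
    (ha : closure (Set.range fun k : ℤ => (φe ^ k) P) ⊆
        (Set.range fun k : ℤ => (φe ^ k) P) ∪
          {x : (ℝ × ℝ) ⧸ L | ∃ n : ℕ, 0 < n ∧ n • x = 0})
    -- (b) some representative of an element of the orbit closure realizes `M(P)`:
    (hb : ∃ Q : ℝ × ℝ,
        QuotientAddGroup.mk Q ∈ closure (Set.range fun k : ℤ => (φe ^ k) P) ∧
        Nm Q = Mbar P) :
    ∃ a : K, Mbar P = (a : ℝ) := by
  subst hK
  have hσK : ∀ x, σ x ∈ ℚ⟮(Real.sqrt D : ℝ)⟯ :=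
    IntermediateField.map_mem_adjoin_simple_of_sq_eq (q := D) (by simp) σ
  have hLW : L ≤ (kPoints ℚ⟮(Real.sqrt D : ℝ)⟯).toAddSubgroup := by
    refine le_kPoints_of_subset_range hσK ?_
    rw [hL, show ι = _ from funext hι]
    exact Set.image_subset_range _ _
  obtain ⟨Q, hQ, hNQ⟩ := hb
  have hQK : Q ∈ kPoints ℚ⟮(Real.sqrt D : ℝ)⟯ := by
    rcases ha hQ with ⟨k, hk⟩ | ⟨n, hn, htors⟩
    · obtain ⟨a, b, rfl⟩ := hP
      rw [← Submodule.mem_toAddSubgroup, ← mk_mem_map_mk'_iff hLW, ← hk]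
      have hφK := perm_apply_mem_map_kPoints_iff hσK hLW hφ
      exact (Equiv.Perm.zpow_apply_mem_iff hφK k _).mpr ((mk_mem_map_mk'_iff hLW).mpr ⟨a.2, b.2⟩)
    · exact mem_of_nsmul_mk_eq_zero hLW hn.ne' htors
  rw [← hNQ, hNm]
  exact ⟨⟨_, abs_mem_iff.mpr (mul_mem hQK.1 hQK.2)⟩, rfl⟩

/-- If `P ∈ T_K` is a `K`-point, then `M(P) ∈ K`. -/
theorem Kpoint_M_mem_K
    (D : ℕ) (hD : Squarefree D) (hD1 : 1 < D)
    (K : IntermediateField ℚ ℝ) (hK : K = ℚ⟮(Real.sqrt D : ℝ)⟯)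
    (σ : K →+* ℝ) (hσ : ∃ x : K, σ x ≠ (x : ℝ))
    (ι : K → ℝ × ℝ) (hι : ∀ a : K, ι a = (σ a, (a : ℝ)))
    (L : AddSubgroup (ℝ × ℝ)) (hL : (L : Set (ℝ × ℝ)) = ι '' {a : K | IsIntegral ℤ a})
    (Nm : ℝ × ℝ → ℝ) (hNm : ∀ p, Nm p = |p.1 * p.2|)
    (Mbar : (ℝ × ℝ) ⧸ L → ℝ)
    (ε : K)
    (φe : ((ℝ × ℝ) ⧸ L) ≃ ((ℝ × ℝ) ⧸ L))
    (hφ : ∀ v : ℝ × ℝ,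
      φe (QuotientAddGroup.mk v) = QuotientAddGroup.mk (σ ε * v.1, (ε : ℝ) * v.2))
    (hinv : ∀ x, Mbar (φe x) = Mbar x)
    (P : (ℝ × ℝ) ⧸ L)
    -- `P` is a `K`-point:
    (hP : ∃ a b : K, P = QuotientAddGroup.mk (((a : ℝ), (b : ℝ)) : ℝ × ℝ))
    -- (a) the orbit closure of the `K`-point `P` consists of the orbit of `P`
    -- together with finitely many torsion points:
    (ha : closure (Set.range fun k : ℤ => (φe ^ k) P) ⊆
        (Set.range fun k : ℤ => (φe ^ k) P) ∪
          {x : (ℝ × ℝ) ⧸ L | ∃ n : ℕ, 0 < n ∧ n • x = 0})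
    (hafin : {x ∈ closure (Set.range fun k : ℤ => (φe ^ k) P) |
        ∃ n : ℕ, 0 < n ∧ n • x = 0}.Finite)
    -- (b) some representative of an element of the orbit closure realizes `M(P)`:
    (hb : ∃ Q : ℝ × ℝ,
        QuotientAddGroup.mk Q ∈ closure (Set.range fun k : ℤ => (φe ^ k) P) ∧
        Nm Q = Mbar P)
    -- (c) `M` of a torsion point is rational:
    (hc : ∀ x : (ℝ × ℝ) ⧸ L, (∃ n : ℕ, 0 < n ∧ n • x = 0) → ∃ q : ℚ, Mbar x = q) :
    ∃ a : K, Mbar P = (a : ℝ) :=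
  Kpoint_M_mem_K_general D K hK σ ι hι L hL Nm hNm Mbar ε φe hφ P hP ha hb
end

section
/- If P ∈ T_K is a Q-point (P ∈ K/O_K), then P is determinate and M(P) ∈ Q: there exists a representative Q of a point in the finite orbit of P with N(Q) = M(P), and this value is rational. -/
/-!
A periodic point of `φ` has a finite orbit. The lattice `L = ι(𝓞_K)` is spanned by `ι 1 = (1, 1)`
and `ι α = (σ α, α)`, which are `ℝ`-independent because `σ` is not the identity on `K`; so `L` is
discrete, hence closed, and finite sets in `(ℝ × ℝ) ⧸ L` are closed. The orbit-closure lemma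
therefore produces a representative `Q` of a point of the orbit itself. That point is a
`ℚ`-point, so `Q` is a rational combination of `ι 1` and `ι α`, and `N(Q) = M(P)` is rational.
-/

open NumberField IntermediateField

theorem Equiv.Perm.finite_range_zpow_apply {X : Type*} (f : Equiv.Perm X) {x : X} {n : ℕ}
    (hn : 0 < n) (hx : (f ^ n) x = x) : (Set.range fun k : ℤ => (f ^ k) x).Finite := by
  have hmod (k : ℤ) : (f ^ k) x = (f ^ (k % n)) x := by
    have hxn : (f ^ (n : ℤ)) x = x := by rwa [zpow_natCast]
    conv_lhs => rw [← Int.emod_add_mul_ediv k n]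
    rw [zpow_add, zpow_mul, Equiv.Perm.mul_apply, zpow_apply_eq_self_of_apply_eq_self hxn]
  refine ((Set.finite_Ico 0 (n : ℤ)).image fun k => (f ^ k) x).subset ?_
  rintro _ ⟨k, rfl⟩
  exact ⟨k % n, ⟨Int.emod_nonneg k (by omega), Int.emod_lt_of_pos k (by omega)⟩, (hmod k).symm⟩

theorem isClosed_span_int_of_linearIndependent {ι E : Type*} [Fintype ι] [NormedAddCommGroup E]
    [NormedSpace ℝ E] [FiniteDimensional ℝ E] {b : ι → E} (hb : LinearIndependent ℝ b)
    (hcard : Fintype.card ι = Module.finrank ℝ E) :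
    IsClosed (Submodule.span ℤ (Set.range b) : Set E) := by
  have := AddSubgroup.isClosed_of_discrete (H := (Submodule.span ℤ
    (Set.range (Module.Basis.mk hb (hb.span_eq_top_of_card_eq_finrank' hcard).ge))).toAddSubgroup)
  rwa [Module.Basis.coe_mk] at this

theorem linearIndependent_pair_one_one {F : Type*} [Field F] {a b : F} (h : a ≠ b) :
    LinearIndependent F ![((1 : F), (1 : F)), (a, b)] := by
  rw [LinearIndependent.pair_iff]
  intro s t hst
  simp only [Prod.smul_mk, smul_eq_mul, mul_one, Prod.mk_add_mk, Prod.mk_eq_zero] at hst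
  have ht : t = 0 := by
    by_contra ht
    exact h (mul_left_cancel₀ ht (by linear_combination hst.1 - hst.2))
  exact ⟨by simpa [ht] using hst.1, ht⟩

theorem IntermediateField.finiteDimensional_adjoin_sqrt_natCast (D : ℕ) :
    FiniteDimensional ℚ ℚ⟮(Real.sqrt D : ℝ)⟯ := by
  refine adjoin.finiteDimensional (IsIntegral.of_pow two_pos ?_)
  rw [Real.sq_sqrt D.cast_nonneg]
  exact isIntegral_algebraMap

theorem RingHom.ext_of_apply_eq_of_isIntegral_pair {K R : Type*} [Field K] [CharZero K]
    [Algebra.IsAlgebraic ℚ K] [CommRing R] [IsDomain R] [CharZero R] {f g : K →+* R} (α : K)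
    (hbasis : ∀ a : K, _root_.IsIntegral ℤ a → ∃ m n : ℤ, a = m + n * α) (h : f α = g α) :
    f = g := by
  ext x
  have hx : IsAlgebraic ℤ x :=
    (IsFractionRing.isAlgebraic_iff ℤ ℚ K).mpr (Algebra.IsAlgebraic.isAlgebraic x)
  obtain ⟨y, hy, hyx⟩ := hx.exists_integral_multiple
  obtain ⟨m, n, hmn⟩ := hbasis _ hyx
  have hfg : f (y • x) = g (y • x) := by simp [hmn, h]
  simp only [zsmul_eq_mul, map_mul, map_intCast] at hfg
  exact mul_left_cancel₀ (Int.cast_ne_zero.mpr hy) hfg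

theorem AddMonoidHom.image_int_pair_eq_span_pair {K M : Type*} [Ring K] [AddCommGroup M]
    (ι : K →+ M) (α : K) :
    ι '' {a | ∃ m n : ℤ, a = m + n * α} = Submodule.span ℤ {ι 1, ι α} := by
  have hι (m n : ℤ) : ι (m + n * α) = m • ι 1 + n • ι α := by
    rw [map_add, ← zsmul_eq_mul, map_zsmul, ← map_zsmul ι m 1, zsmul_one]
  ext p
  simp only [Set.mem_image, Set.mem_ofPred_eq, SetLike.mem_coe, Submodule.mem_span_pair]
  constructor
  · rintro ⟨a, ⟨m, n, rfl⟩, rfl⟩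
    exact ⟨m, n, hι m n |>.symm⟩
  · rintro ⟨m, n, rfl⟩
    exact ⟨m + n * α, ⟨m, n, rfl⟩, hι m n⟩

theorem exists_rat_smul_add_of_sub_mem_span {M : Type*} [AddCommGroup M] [Module ℝ M] {u v q : M}
    {x y : ℚ} (h : q - ((x : ℝ) • u + (y : ℝ) • v) ∈ Submodule.span ℤ {u, v}) :
    ∃ x' y' : ℚ, q = (x' : ℝ) • u + (y' : ℝ) • v := by
  obtain ⟨m, n, hmn⟩ := Submodule.mem_span_pair.mp h
  refine ⟨x + m, y + n, ?_⟩
  rw [← Int.cast_smul_eq_zsmul ℝ, ← Int.cast_smul_eq_zsmul ℝ, eq_sub_iff_add_eq] at hmn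
  push_cast
  rw [add_smul, add_smul, ← hmn]
  abel

theorem Qpoint_determinate_and_M_rational_general
    (D : ℕ)
    (K : IntermediateField ℚ ℝ) (hK : K = ℚ⟮(Real.sqrt D : ℝ)⟯)
    (σ : K →+* ℝ) (hσ : ∃ x : K, σ x ≠ (x : ℝ))
    (ι : K → ℝ × ℝ) (hι : ∀ a : K, ι a = (σ a, (a : ℝ)))
    (α : K)
    (hbasis : ∀ a : K, IsIntegral ℤ a ↔ ∃ m n : ℤ, a = (m : K) + (n : K) * α)
    (L : AddSubgroup (ℝ × ℝ)) (hL : (L : Set (ℝ × ℝ)) = ι '' {a : K | IsIntegral ℤ a})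
    (Nm : ℝ × ℝ → ℝ)
    (Mbar : (ℝ × ℝ) ⧸ L → ℝ)
    (φe : ((ℝ × ℝ) ⧸ L) ≃ ((ℝ × ℝ) ⧸ L))
    -- the orbit-closure lemma:
    (horb : ∀ x : (ℝ × ℝ) ⧸ L, ∃ Q : ℝ × ℝ,
        QuotientAddGroup.mk Q ∈ closure (Set.range fun k : ℤ => (φe ^ k) x) ∧
        Nm Q = Mbar x)
    -- `N` of a point with rational `(x,y)`-coordinates is rational:
    (hratN : ∀ x y : ℚ, ∃ q : ℚ, Nm ((x : ℝ) • ι 1 + (y : ℝ) • ι α) = q)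
    -- the orbit of a `ℚ`-point consists of `ℚ`-points:
    (hφQ : ∀ x : (ℝ × ℝ) ⧸ L,
        (∃ x0 y0 : ℚ, x = QuotientAddGroup.mk ((x0 : ℝ) • ι 1 + (y0 : ℝ) • ι α)) →
        ∀ k : ℤ, ∃ x1 y1 : ℚ,
          (φe ^ k) x = QuotientAddGroup.mk ((x1 : ℝ) • ι 1 + (y1 : ℝ) • ι α))
    (P : (ℝ × ℝ) ⧸ L)
    -- `P` is a `ℚ`-point:
    (hP : ∃ x y : ℚ, P = QuotientAddGroup.mk ((x : ℝ) • ι 1 + (y : ℝ) • ι α))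
    -- `ℚ`-points are periodic:
    (hper : ∃ n : ℕ, 0 < n ∧ (φe ^ n) P = P) :
    (∃ Q : ℝ × ℝ, (∃ k : ℤ, QuotientAddGroup.mk Q = (φe ^ k) P) ∧ Nm Q = Mbar P) ∧
    ∃ q : ℚ, Mbar P = q := by
  have : FiniteDimensional ℚ K := hK ▸ finiteDimensional_adjoin_sqrt_natCast D
  have hσα : σ α ≠ α := fun h ↦ by
    obtain ⟨x, hx⟩ := hσ
    exact hx congr($(RingHom.ext_of_apply_eq_of_isIntegral_pair (g := algebraMap K ℝ) α
      (fun a ↦ (hbasis a).1) h) x)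
  have hLspan : (L : Set (ℝ × ℝ)) = Submodule.span ℤ {ι 1, ι α} := by
    have hιhom : ι = σ.toAddMonoidHom.prod (algebraMap K ℝ).toAddMonoidHom := funext hι
    have hintegral : {a : K | IsIntegral ℤ a} = {a | ∃ m n : ℤ, a = m + n * α} :=
      Set.ext hbasis
    rw [hL, hintegral, hιhom, AddMonoidHom.image_int_pair_eq_span_pair]
  have : IsClosed (L : Set (ℝ × ℝ)) := by
    have hli : LinearIndependent ℝ ![ι 1, ι α] := by
      rw [hι, hι, map_one, OneMemClass.coe_one]
      exact linearIndependent_pair_one_one hσα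
    rw [hLspan, ← Matrix.range_cons_cons_empty (ι 1) (ι α) ![]]
    exact isClosed_span_int_of_linearIndependent hli (by simp)
  obtain ⟨n, hn, hfix⟩ := hper
  obtain ⟨Q, hQ, hNQ⟩ := horb P
  obtain ⟨k, hk⟩ : QuotientAddGroup.mk Q ∈ Set.range fun k : ℤ => (φe ^ k) P := by
    rwa [(Equiv.Perm.finite_range_zpow_apply φe hn hfix).isClosed.closure_eq] at hQ
  obtain ⟨x, y, hxy⟩ := hφQ P hP k
  obtain ⟨x', y', rfl⟩ := exists_rat_smul_add_of_sub_mem_span (q := Q) (x := x) (y := y) <| by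
    rw [← SetLike.mem_coe, ← hLspan]
    exact QuotientAddGroup.eq_iff_sub_mem.mp (hk.symm.trans hxy)
  obtain ⟨q, hq⟩ := hratN x' y'
  exact ⟨⟨_, ⟨k, hk.symm⟩, hNQ⟩, q, hNQ ▸ hq⟩

/-- If `P ∈ T_K` is a `ℚ`-point (i.e. `P ∈ K/𝓞_K`, equivalently `P` has rational
coordinates with respect to the `ℤ`-basis `{1, α_K}` of `𝓞_K`), then `P` is
determinate and `M(P) ∈ ℚ`: there exists a representative `Q` of a point of the
finite orbit of `P` with `N(Q) = M(P)`, and this value is rational. -/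
theorem Qpoint_determinate_and_M_rational
    (D : ℕ) (hD : Squarefree D) (hD1 : 1 < D)
    (K : IntermediateField ℚ ℝ) (hK : K = ℚ⟮(Real.sqrt D : ℝ)⟯)
    (σ : K →+* ℝ) (hσ : ∃ x : K, σ x ≠ (x : ℝ))
    (ι : K → ℝ × ℝ) (hι : ∀ a : K, ι a = (σ a, (a : ℝ)))
    (α : K) (hα : (α : ℝ) = if D % 4 = 1 then (1 + Real.sqrt D) / 2 else Real.sqrt D)
    (hbasis : ∀ a : K, IsIntegral ℤ a ↔ ∃ m n : ℤ, a = (m : K) + (n : K) * α)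
    (L : AddSubgroup (ℝ × ℝ)) (hL : (L : Set (ℝ × ℝ)) = ι '' {a : K | IsIntegral ℤ a})
    (Nm : ℝ × ℝ → ℝ) (hNm : ∀ p, Nm p = |p.1 * p.2|)
    (Mbar : (ℝ × ℝ) ⧸ L → ℝ)
    (φe : ((ℝ × ℝ) ⧸ L) ≃ ((ℝ × ℝ) ⧸ L))
    (hinv : ∀ x, Mbar (φe x) = Mbar x)
    -- the orbit-closure lemma:
    (horb : ∀ x : (ℝ × ℝ) ⧸ L, ∃ Q : ℝ × ℝ,
        QuotientAddGroup.mk Q ∈ closure (Set.range fun k : ℤ => (φe ^ k) x) ∧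
        Nm Q = Mbar x)
    -- `N` of a point with rational `(x,y)`-coordinates is rational:
    (hratN : ∀ x y : ℚ, ∃ q : ℚ, Nm ((x : ℝ) • ι 1 + (y : ℝ) • ι α) = q)
    -- the orbit of a `ℚ`-point consists of `ℚ`-points:
    (hφQ : ∀ x : (ℝ × ℝ) ⧸ L,
        (∃ x0 y0 : ℚ, x = QuotientAddGroup.mk ((x0 : ℝ) • ι 1 + (y0 : ℝ) • ι α)) →
        ∀ k : ℤ, ∃ x1 y1 : ℚ,
          (φe ^ k) x = QuotientAddGroup.mk ((x1 : ℝ) • ι 1 + (y1 : ℝ) • ι α))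
    (P : (ℝ × ℝ) ⧸ L)
    -- `P` is a `ℚ`-point:
    (hP : ∃ x y : ℚ, P = QuotientAddGroup.mk ((x : ℝ) • ι 1 + (y : ℝ) • ι α))
    -- `ℚ`-points are periodic:
    (hper : ∃ n : ℕ, 0 < n ∧ (φe ^ n) P = P) :
    (∃ Q : ℝ × ℝ, (∃ k : ℤ, QuotientAddGroup.mk Q = (φe ^ k) P) ∧ Nm Q = Mbar P) ∧
    ∃ q : ℚ, Mbar P = q :=
  Qpoint_determinate_and_M_rational_general D K hK σ hσ ι hι α hbasis L hL Nm Mbar φe horb hratN hφQ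
    P hP hper
end

section
/- For K = Q(√5) the sequence of Euclidean minima M_{i+1} = (f_{6i−2} + f_{6i−4}) / (4(f_{6i−1} + f_{6i−3} − 2)), where f_k is the k-th Fibonacci number, is strictly decreasing and converges to (−1+√5)/8. -/
/-!
Since `f_{k-1} + f_{k+1}` is the Lucas number `L_k`, the minima are `M_{i+1} = L_n / (4 (L_{n+1} - 2))`
with `n = 6i + 3`. Binet's formula `L_n = φ^n + ψ^n` gives `L_n L_{n+3} - L_{n+1} L_{n+2} = 5 (-1)^n`,
which for odd `n` turns the step `n ↦ n + 2` of the quotient into the inequality `5 < 2 L_{n+1}`;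
so the quotient already decreases along all odd `n`. Binet's formula also gives `L_n / φ^n → 1`,
hence the quotient tends to `1 / (4φ) = (√5 - 1) / 8`.
-/

open Filter Topology Real goldenRatio

def lucas : ℕ → ℕ
  | 0 => 2
  | 1 => 1
  | n + 2 => lucas n + lucas (n + 1)

theorem lucas_add_one : ∀ n, lucas (n + 1) = Nat.fib n + Nat.fib (n + 2)
  | 0 => rfl
  | 1 => rfl
  | n + 2 => by
    have f₀ : Nat.fib (n + 2) = Nat.fib n + Nat.fib (n + 1) := Nat.fib_add_two
    have f₂ : Nat.fib (n + 4) = Nat.fib (n + 2) + Nat.fib (n + 3) := Nat.fib_add_two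
    have h₁ : lucas (n + 2) = Nat.fib (n + 1) + Nat.fib (n + 3) := lucas_add_one (n + 1)
    show lucas (n + 1) + lucas (n + 2) = Nat.fib (n + 2) + Nat.fib (n + 4)
    rw [lucas_add_one n, h₁]
    omega

theorem three_le_lucas_add_two (n : ℕ) : 3 ≤ lucas (n + 2) := by
  have h₁ : Nat.fib 1 ≤ Nat.fib (n + 1) := Nat.fib_mono (by omega)
  have h₃ : Nat.fib 3 ≤ Nat.fib (n + 1 + 2) := Nat.fib_mono (by omega)
  rw [lucas_add_one]
  simp only [Nat.fib_one, show Nat.fib 3 = 2 from rfl] at h₁ h₃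
  omega

theorem coe_lucas : ∀ n, (lucas n : ℝ) = φ ^ n + ψ ^ n
  | 0 => by norm_num [lucas]
  | 1 => by simp [lucas, goldenRatio_add_goldenConj]
  | n + 2 => by
    rw [lucas, Nat.cast_add, coe_lucas n, coe_lucas (n + 1)]
    linear_combination (-φ ^ n) * goldenRatio_sq - ψ ^ n * goldenConj_sq

theorem lucas_mul_lucas_add_three_sub (n : ℕ) :
    (lucas n * lucas (n + 3) : ℝ) - lucas (n + 1) * lucas (n + 2) = 5 * (-1) ^ n := by
  simp only [coe_lucas]
  have h5 : (φ - ψ) ^ 2 = 5 := by rw [goldenRatio_sub_goldenConj]; norm_num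
  calc _ = (φ * ψ) ^ n * ((φ + ψ) * (φ - ψ) ^ 2) := by rw [mul_pow]; ring
    _ = _ := by rw [goldenRatio_mul_goldenConj, goldenRatio_add_goldenConj, h5]; ring

noncomputable def lucasQuotient (n : ℕ) : ℝ := lucas n / (4 * ((lucas (n + 1) : ℝ) - 2))

theorem lucasQuotient_add_one (n : ℕ) : lucasQuotient (n + 1) =
    ((Nat.fib (n + 2) : ℝ) + Nat.fib n) / (4 * ((Nat.fib (n + 3) : ℝ) + Nat.fib (n + 1) - 2)) := by
  rw [lucasQuotient, lucas_add_one, lucas_add_one]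
  push_cast
  ring

theorem lucasQuotient_add_two_lt {n : ℕ} (hn : Odd n) :
    lucasQuotient (n + 2) < lucasQuotient n := by
  obtain ⟨k, rfl⟩ := hn
  have hD := lucas_mul_lucas_add_three_sub (2 * k + 1)
  rw [(odd_two_mul_add_one k).neg_one_pow] at hD
  have hsum : (lucas (2 * k + 1 + 2) : ℝ) = lucas (2 * k + 1) + lucas (2 * k + 1 + 1) := by
    exact_mod_cast rfl
  have hb : (3 : ℝ) ≤ lucas (2 * k + 1 + 1) := by exact_mod_cast three_le_lucas_add_two (2 * k)
  have hd : (3 : ℝ) ≤ lucas (2 * k + 1 + 3) := by exact_mod_cast three_le_lucas_add_two (2 * k + 2)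
  rw [lucasQuotient, lucasQuotient, div_lt_div_iff₀ (by linarith) (by linarith)]
  linarith

theorem strictAnti_lucasQuotient_odd : StrictAnti fun m => lucasQuotient (2 * m + 1) :=
  strictAnti_nat_of_succ_lt fun m => lucasQuotient_add_two_lt (odd_two_mul_add_one m)

theorem tendsto_lucas_div_goldenRatio_pow :
    Tendsto (fun n => (lucas n : ℝ) / φ ^ n) atTop (𝓝 1) := by
  have hq : |ψ / φ| < 1 := by
    rw [abs_div, abs_of_pos goldenRatio_pos, div_lt_one goldenRatio_pos, abs_of_neg goldenConj_neg]
    linarith [one_lt_goldenRatio, neg_one_lt_goldenConj]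
  have h := (tendsto_pow_atTop_nhds_zero_of_abs_lt_one hq).const_add 1
  rw [add_zero] at h
  refine h.congr fun n => ?_
  rw [coe_lucas, div_pow, add_div, div_self (pow_ne_zero n goldenRatio_ne_zero)]

theorem tendsto_lucasQuotient : Tendsto lucasQuotient atTop (𝓝 (4 * φ)⁻¹) := by
  have hL := tendsto_lucas_div_goldenRatio_pow
  have hφ : Tendsto (fun n => (φ⁻¹) ^ n) atTop (𝓝 0) :=
    tendsto_pow_atTop_nhds_zero_of_lt_one (inv_nonneg.2 goldenRatio_pos.le)
      (inv_lt_one_of_one_lt₀ one_lt_goldenRatio)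
  have hden := (((hL.comp (tendsto_add_atTop_nat 1)).const_mul φ).sub (hφ.const_mul 2)).const_mul 4
  rw [mul_one, mul_zero, sub_zero] at hden
  have hquot := hL.div hden (mul_ne_zero four_ne_zero goldenRatio_ne_zero)
  rw [one_div] at hquot
  refine hquot.congr fun n => ?_
  have := pow_ne_zero n goldenRatio_ne_zero
  rw [Pi.div_apply, Function.comp_apply, lucasQuotient, inv_pow, pow_succ]
  field_simp

/-- For `K = ℚ(√5)`, the sequence of Euclidean minima
`M_{i+1} = (f_{6i−2} + f_{6i−4}) / (4(f_{6i−1} + f_{6i−3} − 2))` (for `i ≥ 1`, with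
`f_k` the `k`-th Fibonacci number; here reindexed by `i ↦ i + 1`) is strictly
decreasing and converges to `(−1 + √5)/8`. -/
theorem euclidean_minima_sqrt5_strictAnti_tendsto
    (M : ℕ → ℝ)
    (hM : ∀ i : ℕ, M i =
      ((Nat.fib (6 * (i + 1) - 2) : ℝ) + (Nat.fib (6 * (i + 1) - 4) : ℝ)) /
        (4 * ((Nat.fib (6 * (i + 1) - 1) : ℝ) + (Nat.fib (6 * (i + 1) - 3) : ℝ) - 2))) :
    StrictAnti M ∧ Tendsto M atTop (nhds ((-1 + Real.sqrt 5) / 8)) := by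
  have hM' : M = (fun m => lucasQuotient (2 * m + 1)) ∘ (fun i => 3 * i + 1) := by
    funext i
    rw [hM, Function.comp_apply, show 2 * (3 * i + 1) + 1 = 6 * i + 2 + 1 by ring,
      lucasQuotient_add_one, show 6 * (i + 1) - 2 = 6 * i + 2 + 2 by omega,
      show 6 * (i + 1) - 4 = 6 * i + 2 by omega, show 6 * (i + 1) - 1 = 6 * i + 2 + 3 by omega,
      show 6 * (i + 1) - 3 = 6 * i + 2 + 1 by omega]
  have hmono : StrictMono fun i => 3 * i + 1 := fun a b h => show 3 * a + 1 < 3 * b + 1 by omega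
  have hidx : Tendsto (fun i => 2 * (3 * i + 1) + 1) atTop atTop :=
    StrictMono.tendsto_atTop fun a b h => show 2 * (3 * a + 1) + 1 < 2 * (3 * b + 1) + 1 by omega
  have hlim : (4 * φ)⁻¹ = (-1 + √5) / 8 := by
    rw [mul_inv, inv_goldenRatio, goldenConj]
    ring
  refine ⟨hM' ▸ strictAnti_lucasQuotient_odd.comp_strictMono hmono, ?_⟩
  rw [hM', ← hlim]
  exact tendsto_lucasQuotient.comp hidx
end
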